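/- Let K satisfy 0 ≤ K(x,y) = K(y,x) ≤ κ₁(2+x+y) for all (x,y) ∈ (0,∞)² and some κ₁ > 0, let f^in ∈ L¹₁(0,∞) with f^in ≥ 0 a.e., let n ≥ 1, K_n := min{K, n}, and let f_n ∈ C¹([0,∞); L¹(0,∞)) be the unique non-negative global solution of Smoluchowski's coagulation equation with kernel K_n and initial condition f^in, which satisfies ‖f_n(t)‖_{1,1} ≤ ‖f^in‖_{1,1} for all t ≥ 0. Let ψ ∈ 𝒞_VP be such that x ↦ ψ(1+x) f^in(x) belongs to L¹(0,∞). Then for all t ≥ 0 and n ≥ 1: ∫₀^∞ ψ(1+x) f_n(t,x) dx ≤ (∫₀^∞ ψ(1+x) f^in(x) dx) · exp(2κ₁ ‖f^in‖_{1,1} t). -/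

import Mathlib

open MeasureTheory Filter Topology

noncomputable section

/-- Lebesgue measure on the size space `(0,∞)`. -/
def μplus : Measure ℝ := volume.restrict (Set.Ioi (0:ℝ))

/-- The right-hand side of Smoluchowski's coagulation equation with kernel `K`. -/
def coagRHS (K : ℝ → ℝ → ℝ) (f : ℝ → ℝ) (x : ℝ) : ℝ :=
  (1/2) * (∫ y in Set.Ioo (0:ℝ) x, K y (x - y) * f y * f (x - y)) -
    f x * ∫ y in Set.Ioi (0:ℝ), K x y * f y

/-- A solution `f ∈ C¹([0,∞); L¹(0,∞))` of Smoluchowski's coagulation equation with kernel `K`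
and initial condition `f^in`, viewed as a differential equation in the Banach space `L¹(0,∞)`. -/
def IsC1L1Solution (K : ℝ → ℝ → ℝ) (fin : ℝ → ℝ)
    (F F' : ℝ → Lp ℝ 1 μplus) : Prop :=
  (∀ t ∈ Set.Ici (0:ℝ), HasDerivWithinAt F (F' t) (Set.Ici 0) t) ∧
  ContinuousOn F' (Set.Ici 0) ∧
  (∀ t ∈ Set.Ici (0:ℝ), (F' t : ℝ → ℝ) =ᵐ[μplus] coagRHS K (F t)) ∧
  (F 0 : ℝ → ℝ) =ᵐ[μplus] fin


section Aux
open Set intervalIntegral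

instance : SigmaFinite μplus := by unfold μplus; infer_instance
instance : SFinite μplus := by unfold μplus; infer_instance


section PsiFacts
variable {ψ ψ' : ℝ → ℝ}

lemma psi_cont (hderiv : ∀ r ∈ Set.Ici (0:ℝ), HasDerivWithinAt ψ (ψ' r) (Set.Ici 0) r) :
    ContinuousOn ψ (Set.Ici 0) :=
  fun r hr => (hderiv r hr).continuousWithinAt

lemma psi_ftc (hderiv : ∀ r ∈ Set.Ici (0:ℝ), HasDerivWithinAt ψ (ψ' r) (Set.Ici 0) r)
    (hcont : ContinuousOn ψ' (Set.Ici 0)) {a b : ℝ} (ha : 0 ≤ a) (hab : a ≤ b) :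
    ∫ s in a..b, ψ' s = ψ b - ψ a := by
  have hIcc : Set.Icc a b ⊆ Set.Ici (0:ℝ) := fun x hx => le_trans ha hx.1
  refine intervalIntegral.integral_eq_sub_of_hasDeriv_right_of_le hab
    ((psi_cont hderiv).mono hIcc) (fun x hx => ?_) ?_
  · exact (hderiv x (le_trans ha hx.1.le)).mono fun y hy => le_trans (le_trans ha hx.1.le) hy.le
  · refine (hcont.mono ?_).intervalIntegrable
    rwa [Set.uIcc_of_le hab]

lemma psi'_intble (hcont : ContinuousOn ψ' (Set.Ici 0)) {a b : ℝ} (ha : 0 ≤ a) (hab : a ≤ b) :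
    IntervalIntegrable ψ' volume a b := by
  refine (hcont.mono ?_).intervalIntegrable
  rw [Set.uIcc_of_le hab]
  exact fun x hx => le_trans ha hx.1

lemma psi'_subadd (hconc : ConcaveOn ℝ (Set.Ici 0) ψ') (hψ'0 : ψ' 0 = 0)
    {a b : ℝ} (ha : 0 ≤ a) (hb : 0 ≤ b) :
    ψ' (a + b) ≤ ψ' a + ψ' b := by
  rcases eq_or_lt_of_le (by linarith : (0:ℝ) ≤ a + b) with h | hab
  · have ha0 : a = 0 := by linarith
    have hb0 : b = 0 := by linarith
    simp [ha0, hb0, hψ'0]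
  set c := a + b with hc
  have hcne : c ≠ 0 := ne_of_gt hab
  have h1 : (a / c) * ψ' c ≤ ψ' a := by
    have := hconc.2 (Set.mem_Ici.2 hab.le) (Set.mem_Ici.2 le_rfl)
      (div_nonneg ha hab.le) (div_nonneg hb hab.le) (by field_simp; exact hc.symm)
    simp only [smul_eq_mul, mul_zero, add_zero, hψ'0] at this
    rwa [div_mul_cancel₀ _ hcne] at this
  have h2 : (b / c) * ψ' c ≤ ψ' b := by
    have := hconc.2 (Set.mem_Ici.2 hab.le) (Set.mem_Ici.2 le_rfl)
      (div_nonneg hb hab.le) (div_nonneg ha hab.le) (by field_simp; ring)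
    simp only [smul_eq_mul, mul_zero, add_zero, hψ'0] at this
    rwa [div_mul_cancel₀ _ hcne] at this
  have h3 : (a / c) * ψ' c + (b / c) * ψ' c = ψ' c := by field_simp; ring
  linarith

/-- `a * ψ'(a) ≤ 2 * ψ(a)` for `a ≥ 0`. -/
lemma psi'_le (hderiv : ∀ r ∈ Set.Ici (0:ℝ), HasDerivWithinAt ψ (ψ' r) (Set.Ici 0) r)
    (hcont : ContinuousOn ψ' (Set.Ici 0))
    (hconc : ConcaveOn ℝ (Set.Ici 0) ψ') (hψ0 : ψ 0 = 0) (hψ'0 : ψ' 0 = 0)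
    {a : ℝ} (ha : 0 ≤ a) : a * ψ' a ≤ 2 * ψ a := by
  rcases eq_or_lt_of_le ha with h | ha
  · simp [← h, hψ0, hψ'0]
  have hane : a ≠ 0 := ne_of_gt ha
  have hpt : ∀ s ∈ Set.Icc (0:ℝ) a, s * (ψ' a / a) ≤ ψ' s := by
    intro s hs
    have hw : (a - s)/a + s/a = 1 := by field_simp; ring
    have := hconc.2 (Set.mem_Ici.2 (le_refl (0:ℝ))) (Set.mem_Ici.2 ha.le)
      (div_nonneg (by linarith [hs.2]) ha.le) (div_nonneg hs.1 ha.le) hw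
    simp only [smul_eq_mul, mul_zero, zero_add, hψ'0] at this
    calc s * (ψ' a / a) = s / a * ψ' a := by ring
    _ ≤ ψ' (s / a * a) := this
    _ = ψ' s := by rw [div_mul_cancel₀ _ hane]
  have hmono : ∫ s in (0:ℝ)..a, s * (ψ' a / a) ≤ ∫ s in (0:ℝ)..a, ψ' s := by
    refine intervalIntegral.integral_mono_on ha.le ?_ (psi'_intble hcont le_rfl ha.le) hpt
    exact (continuous_id.mul continuous_const).intervalIntegrable _ _
  have hval : ∫ s in (0:ℝ)..a, s * (ψ' a / a) = a * ψ' a / 2 := by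
    rw [intervalIntegral.integral_mul_const, integral_id]
    field_simp; ring
  rw [hval, psi_ftc hderiv hcont le_rfl ha.le, hψ0] at hmono
  linarith

/-- `ψ(a+b) ≤ ψ(a) + ψ(b) + b * ψ'(a)`. -/
lemma psi_add_le (hderiv : ∀ r ∈ Set.Ici (0:ℝ), HasDerivWithinAt ψ (ψ' r) (Set.Ici 0) r)
    (hcont : ContinuousOn ψ' (Set.Ici 0))
    (hconc : ConcaveOn ℝ (Set.Ici 0) ψ') (hψ0 : ψ 0 = 0) (hψ'0 : ψ' 0 = 0)
    {a b : ℝ} (ha : 0 ≤ a) (hb : 0 ≤ b) :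
    ψ (a + b) ≤ ψ a + ψ b + b * ψ' a := by
  have h1 : ψ (a + b) - ψ a = ∫ s in (0:ℝ)..b, ψ' (s + a) := by
    rw [intervalIntegral.integral_comp_add_right, zero_add,
      psi_ftc hderiv hcont ha (by linarith), add_comm b a]
  have h2 : ∫ s in (0:ℝ)..b, ψ' (s + a) ≤ ∫ s in (0:ℝ)..b, (ψ' s + ψ' a) := by
    refine intervalIntegral.integral_mono_on hb ?_ ?_ (fun s hs => ?_)
    · have h0 : IntervalIntegrable ψ' volume (0 + a) (b + a) :=
        psi'_intble hcont (by linarith) (by linarith)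
      simpa using h0.comp_add_right a
    · exact ((psi'_intble hcont le_rfl hb).add (intervalIntegrable_const))
    · linarith [psi'_subadd hconc hψ'0 hs.1 ha]
  have h3 : ∫ s in (0:ℝ)..b, (ψ' s + ψ' a) = ψ b + b * ψ' a := by
    rw [intervalIntegral.integral_add (psi'_intble hcont le_rfl hb) intervalIntegrable_const,
      psi_ftc hderiv hcont le_rfl hb, hψ0, intervalIntegral.integral_const]
    simp only [smul_eq_mul, sub_zero]
  linarith

lemma psi_superadd (hconv : ConvexOn ℝ (Set.Ici 0) ψ) (hψ0 : ψ 0 = 0)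
    {a b : ℝ} (ha : 0 ≤ a) (hb : 0 ≤ b) (hab : 0 < a + b) :
    ψ a + ψ b ≤ ψ (a + b) := by
  set c := a + b with hc
  have hcne : c ≠ 0 := ne_of_gt hab
  have h1 : ψ a ≤ (a / c) * ψ c := by
    have := hconv.2 (Set.mem_Ici.2 (le_of_lt hab)) (Set.mem_Ici.2 le_rfl)
      (div_nonneg ha hab.le) (div_nonneg hb hab.le) (by field_simp; exact hc.symm)
    simp only [smul_eq_mul, mul_zero, add_zero, hψ0] at this
    rwa [div_mul_cancel₀ _ hcne] at this
  have h2 : ψ b ≤ (b / c) * ψ c := by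
    have := hconv.2 (Set.mem_Ici.2 (le_of_lt hab)) (Set.mem_Ici.2 le_rfl)
      (div_nonneg hb hab.le) (div_nonneg ha hab.le) (by field_simp; ring)
    simp only [smul_eq_mul, mul_zero, add_zero, hψ0] at this
    rwa [div_mul_cancel₀ _ hcne] at this
  have h3 : (a / c) * ψ c + (b / c) * ψ c = ψ c := by field_simp; ring
  linarith


end PsiFacts

section PsiFacts2
variable {ψ ψ' : ℝ → ℝ}

lemma psi_mono (hderiv : ∀ r ∈ Set.Ici (0:ℝ), HasDerivWithinAt ψ (ψ' r) (Set.Ici 0) r)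
    (hψ'nn : ∀ r ∈ Set.Ici (0:ℝ), 0 ≤ ψ' r) : MonotoneOn ψ (Set.Ici 0) := by
  have hd : ∀ x ∈ interior (Set.Ici (0:ℝ)), HasDerivAt ψ (ψ' x) x := by
    intro x hx
    rw [interior_Ici] at hx
    exact (hderiv x (Set.mem_Ici.2 (le_of_lt hx))).hasDerivAt (Ici_mem_nhds hx)
  refine monotoneOn_of_deriv_nonneg (convex_Ici 0) (psi_cont hderiv) ?_ ?_
  · exact fun x hx => (hd x hx).differentiableAt.differentiableWithinAt
  · intro x hx
    rw [(hd x hx).deriv]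
    rw [interior_Ici] at hx
    exact hψ'nn x (Set.mem_Ici.2 (le_of_lt hx))

lemma psi_key (hderiv : ∀ r ∈ Set.Ici (0:ℝ), HasDerivWithinAt ψ (ψ' r) (Set.Ici 0) r)
    (hcont : ContinuousOn ψ' (Set.Ici 0))
    (hconc : ConcaveOn ℝ (Set.Ici 0) ψ') (hψ0 : ψ 0 = 0) (hψ'0 : ψ' 0 = 0)
    {a b : ℝ} (ha : 0 ≤ a) (hb : 0 ≤ b) :
    (a + b) * (ψ (a + b) - ψ a - ψ b) ≤ 2 * (b * ψ a + a * ψ b) := by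
  have h1 := psi_add_le hderiv hcont hconc hψ0 hψ'0 ha hb
  have h2 := psi_add_le hderiv hcont hconc hψ0 hψ'0 hb ha
  rw [add_comm b a] at h2
  have h3 := psi'_le hderiv hcont hconc hψ0 hψ'0 ha
  have h4 := psi'_le hderiv hcont hconc hψ0 hψ'0 hb
  have e1 : a * (ψ (a + b) - ψ a - ψ b) ≤ b * (2 * ψ a) := by
    calc a * (ψ (a + b) - ψ a - ψ b) ≤ a * (b * ψ' a) :=
          mul_le_mul_of_nonneg_left (by linarith) ha
    _ = b * (a * ψ' a) := by ring
    _ ≤ b * (2 * ψ a) := mul_le_mul_of_nonneg_left h3 hb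
  have e2 : b * (ψ (a + b) - ψ a - ψ b) ≤ a * (2 * ψ b) := by
    calc b * (ψ (a + b) - ψ a - ψ b) ≤ b * (a * ψ' b) :=
          mul_le_mul_of_nonneg_left (by linarith) hb
    _ = a * (b * ψ' b) := by ring
    _ ≤ a * (2 * ψ b) := mul_le_mul_of_nonneg_left h4 ha
  nlinarith [e1, e2]

end PsiFacts2

/-- The truncated moment weight. -/
def chiA (ψ : ℝ → ℝ) (A : ℝ) (x : ℝ) : ℝ := ψ (1 + min (max x 0) A)

section ChiFacts
variable {ψ ψ' : ℝ → ℝ} {A : ℝ}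

lemma chi_arg_mem (hA : 0 ≤ A) (x : ℝ) : (0:ℝ) ≤ 1 + min (max x 0) A := by
  have : (0:ℝ) ≤ min (max x 0) A := le_min (le_max_right _ _) hA
  linarith

lemma chi_cont (hψc : ContinuousOn ψ (Set.Ici 0)) (hA : 0 ≤ A) :
    Continuous (chiA ψ A) := by
  refine hψc.comp_continuous (by fun_prop) fun x => chi_arg_mem hA x

lemma chi_nonneg (hψm : MonotoneOn ψ (Set.Ici 0)) (hψ0 : ψ 0 = 0) (hA : 0 ≤ A) (x : ℝ) :
    0 ≤ chiA ψ A x := by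
  have := hψm (Set.mem_Ici.2 le_rfl) (chi_arg_mem hA x) (chi_arg_mem hA x)
  rw [hψ0] at this; exact this

lemma chi_le_const (hψm : MonotoneOn ψ (Set.Ici 0)) (hA : 0 ≤ A) (x : ℝ) :
    chiA ψ A x ≤ ψ (1 + A) := by
  refine hψm (chi_arg_mem hA x) (Set.mem_Ici.2 (by linarith)) ?_
  have : min (max x 0) A ≤ A := min_le_right _ _
  linarith

lemma chi_le_psi (hψm : MonotoneOn ψ (Set.Ici 0)) (hA : 0 ≤ A) {x : ℝ} (hx : 0 ≤ x) :
    chiA ψ A x ≤ ψ (1 + x) := by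
  refine hψm (chi_arg_mem hA x) (Set.mem_Ici.2 (by linarith)) ?_
  have : min (max x 0) A ≤ max x 0 := min_le_left _ _
  have h2 : max x 0 = x := max_eq_left hx
  linarith [this, h2.le]

lemma chi_eq_psi {x : ℝ} (hx : 0 ≤ x) (hxA : x ≤ A) : chiA ψ A x = ψ (1 + x) := by
  unfold chiA
  rw [max_eq_left hx, min_eq_left hxA]

lemma chi_mono_A (hψm : MonotoneOn ψ (Set.Ici 0)) {A A' : ℝ} (hA : 0 ≤ A) (hAA' : A ≤ A')
    (x : ℝ) : chiA ψ A x ≤ chiA ψ A' x := by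
  refine hψm (chi_arg_mem hA x) (chi_arg_mem (le_trans hA hAA') x) ?_
  have : min (max x 0) A ≤ min (max x 0) A' := min_le_min le_rfl hAA'
  linarith

/-- The key pointwise kernel inequality. -/
lemma chi_key (hconv : ConvexOn ℝ (Set.Ici 0) ψ) (hderiv : ∀ r ∈ Set.Ici (0:ℝ), HasDerivWithinAt ψ (ψ' r) (Set.Ici 0) r)
    (hcont : ContinuousOn ψ' (Set.Ici 0))
    (hconc : ConcaveOn ℝ (Set.Ici 0) ψ') (hψ0 : ψ 0 = 0) (hψ'0 : ψ' 0 = 0)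
    (hψm : MonotoneOn ψ (Set.Ici 0))
    {κ₁ : ℝ} (hκ₁ : 0 < κ₁) (hA : 0 ≤ A)
    {x y k : ℝ} (hx : 0 < x) (hy : 0 < y) (hk0 : 0 ≤ k) (hkb : k ≤ κ₁ * (2 + x + y)) :
    (1/2) * k * (chiA ψ A (x + y) - chiA ψ A x - chiA ψ A y)
      ≤ κ₁ * ((1 + x) * chiA ψ A y + (1 + y) * chiA ψ A x) := by
  have hRHS : 0 ≤ κ₁ * ((1 + x) * chiA ψ A y + (1 + y) * chiA ψ A x) := by
    have c1 := chi_nonneg hψm hψ0 hA y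
    have c2 := chi_nonneg hψm hψ0 hA x
    have : 0 ≤ (1 + x) * chiA ψ A y + (1 + y) * chiA ψ A x := by positivity
    positivity
  rcases le_or_gt x A with hxA | hxA
  rcases le_or_gt y A with hyA | hyA
  · -- main case : x ≤ A, y ≤ A
    set a := 1 + x with hadef
    set b := 1 + y with hbdef
    have ha : 0 ≤ a := by simp [hadef]; linarith
    have hb : 0 ≤ b := by simp [hbdef]; linarith
    have hcx : chiA ψ A x = ψ a := chi_eq_psi hx.le hxA
    have hcy : chiA ψ A y = ψ b := chi_eq_psi hy.le hyA
    have hcxy : chiA ψ A (x + y) ≤ ψ (a + b) := by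
      refine hψm (chi_arg_mem hA _) (Set.mem_Ici.2 (by linarith)) ?_
      have h2 : max (x+y) 0 = x + y := max_eq_left (by linarith)
      simp only [hadef, hbdef]
      rw [h2]
      linarith [min_le_left (x+y) A]
    have hconv' : ConvexOn ℝ (Set.Ici 0) ψ := hconv
    have hS : 0 ≤ ψ (a + b) - ψ a - ψ b := by
      linarith [psi_superadd hconv' hψ0 ha hb (by linarith : 0 < a + b)]
    have hk2 : (1/2) * k ≤ (1/2) * (κ₁ * (a + b)) := by
      simp only [hadef, hbdef]; nlinarith
    calc (1/2) * k * (chiA ψ A (x + y) - chiA ψ A x - chiA ψ A y)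
        ≤ (1/2) * k * (ψ (a+b) - ψ a - ψ b) := by
          refine mul_le_mul_of_nonneg_left ?_ (by linarith)
          rw [hcx, hcy]; linarith
      _ ≤ (1/2) * (κ₁ * (a + b)) * (ψ (a+b) - ψ a - ψ b) :=
          mul_le_mul_of_nonneg_right hk2 hS
      _ = (κ₁/2) * ((a + b) * (ψ (a+b) - ψ a - ψ b)) := by ring
      _ ≤ (κ₁/2) * (2 * (b * ψ a + a * ψ b)) := by
          refine mul_le_mul_of_nonneg_left
            (psi_key hderiv hcont hconc hψ0 hψ'0 ha hb) (by positivity)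
      _ = κ₁ * ((1 + x) * ψ b + (1 + y) * ψ a) := by
          simp only [hadef, hbdef]; ring
      _ = κ₁ * ((1 + x) * chiA ψ A y + (1 + y) * chiA ψ A x) := by rw [hcx, hcy]
  · -- case y > A
    have hxy : chiA ψ A (x + y) = ψ (1 + A) := by
      unfold chiA
      rw [max_eq_left (by linarith : (0:ℝ) ≤ x + y), min_eq_right (by linarith : A ≤ x + y)]
    have hcy : chiA ψ A y = ψ (1 + A) := by
      unfold chiA
      rw [max_eq_left hy.le, min_eq_right hyA.le]
    have : (1/2) * k * (chiA ψ A (x + y) - chiA ψ A x - chiA ψ A y) ≤ 0 := by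
      rw [hxy, hcy]
      have h0 := chi_nonneg hψm hψ0 hA x
      have : ψ (1+A) - chiA ψ A x - ψ (1+A) = -(chiA ψ A x) := by ring
      rw [this]
      exact mul_nonpos_of_nonneg_of_nonpos (by linarith) (by linarith)
    linarith
  · -- case x > A
    have hxy : chiA ψ A (x + y) = ψ (1 + A) := by
      unfold chiA
      rw [max_eq_left (by linarith : (0:ℝ) ≤ x + y), min_eq_right (by linarith : A ≤ x + y)]
    have hcx : chiA ψ A x = ψ (1 + A) := by
      unfold chiA
      rw [max_eq_left hx.le, min_eq_right hxA.le]
    have : (1/2) * k * (chiA ψ A (x + y) - chiA ψ A x - chiA ψ A y) ≤ 0 := by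
      rw [hxy, hcx]
      have h0 := chi_nonneg hψm hψ0 hA y
      have : ψ (1+A) - ψ (1+A) - chiA ψ A y = -(chiA ψ A y) := by ring
      rw [this]
      exact mul_nonpos_of_nonneg_of_nonpos (by linarith) (by linarith)
    linarith

end ChiFacts

/-- Pairing of a bounded continuous weight with an `L¹` function, as a CLM. -/
def pairing (χ : ℝ → ℝ) (hχ : Continuous χ) (Cb : ℝ) (hb : ∀ x, |χ x| ≤ Cb) :
    Lp ℝ 1 μplus →L[ℝ] ℝ := by
  refine LinearMap.mkContinuous
    { toFun := fun g => ∫ x, χ x * g x ∂μplus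
      map_add' := ?_
      map_smul' := ?_ } Cb ?_
  · intro g h
    have hg := L1.integrable_coeFn g
    have hh := L1.integrable_coeFn h
    have h1 : ∫ x, χ x * (g + h : Lp ℝ 1 μplus) x ∂μplus
        = ∫ x, (χ x * g x + χ x * h x) ∂μplus := by
      refine integral_congr_ae ?_
      filter_upwards [Lp.coeFn_add g h] with x hx
      rw [hx]; simp; ring
    show (∫ x, χ x * (g + h : Lp ℝ 1 μplus) x ∂μplus) = _
    rw [h1, integral_add (hg.bdd_mul (c := Cb) hχ.aestronglyMeasurable ?_)
      (hh.bdd_mul (c := Cb) hχ.aestronglyMeasurable ?_)]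
    · exact Eventually.of_forall fun x => by simpa using hb x
    · exact Eventually.of_forall fun x => by simpa using hb x
  · intro c g
    have h1 : ∫ x, χ x * (c • g : Lp ℝ 1 μplus) x ∂μplus
        = ∫ x, c * (χ x * g x) ∂μplus := by
      refine integral_congr_ae ?_
      filter_upwards [Lp.coeFn_smul c g] with x hx
      rw [hx]; simp; ring
    show (∫ x, χ x * (c • g : Lp ℝ 1 μplus) x ∂μplus) = _
    rw [h1, MeasureTheory.integral_const_mul]
    rfl
  · intro g
    simp only [LinearMap.coe_mk, AddHom.coe_mk]
    have hg := L1.integrable_coeFn g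
    calc ‖∫ x, χ x * g x ∂μplus‖ ≤ ∫ x, ‖χ x * g x‖ ∂μplus := norm_integral_le_integral_norm _
    _ ≤ ∫ x, Cb * ‖g x‖ ∂μplus := by
        refine integral_mono_of_nonneg (Eventually.of_forall fun x => norm_nonneg _)
          (hg.norm.const_mul Cb) (Eventually.of_forall fun x => ?_)
        show ‖χ x * g x‖ ≤ Cb * ‖g x‖
        rw [norm_mul]
        exact mul_le_mul_of_nonneg_right (by simpa using hb x) (norm_nonneg _)
    _ = Cb * ‖g‖ := by rw [MeasureTheory.integral_const_mul, L1.norm_eq_integral_norm]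

lemma pairing_apply (χ : ℝ → ℝ) (hχ : Continuous χ) (Cb : ℝ) (hb : ∀ x, |χ x| ≤ Cb)
    (g : Lp ℝ 1 μplus) : pairing χ hχ Cb hb g = ∫ x, χ x * g x ∂μplus := rfl

/-- The shear `(x,y) ↦ (y, x - y)` as a measurable equivalence of `ℝ²`. -/
def shearEquiv : (ℝ × ℝ) ≃ᵐ (ℝ × ℝ) where
  toFun := fun p => (p.2, p.1 - p.2)
  invFun := fun p => (p.1 + p.2, p.1)
  left_inv := fun p => by simp
  right_inv := fun p => by simp
  measurable_toFun := (measurable_snd.prodMk (measurable_fst.sub measurable_snd)).comp measurable_id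
  measurable_invFun := ((measurable_fst.add measurable_snd).prodMk measurable_fst).comp measurable_id

lemma shearEquiv_mp : MeasurePreserving (shearEquiv : ℝ × ℝ → ℝ × ℝ)
    (volume.prod volume) (volume.prod volume) :=
  measurePreserving_prod_sub_swap volume volume

/-- Weak form of the coagulation operator against a bounded weight, with the
symmetrization inequality. -/
lemma coag_weak_bound
    (Kn : ℝ → ℝ → ℝ) (hKnm : Measurable (Function.uncurry Kn))
    (Cn : ℝ)
    (hKn0 : ∀ x ∈ Set.Ioi (0:ℝ), ∀ y ∈ Set.Ioi (0:ℝ), 0 ≤ Kn x y)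
    (hKnb : ∀ x ∈ Set.Ioi (0:ℝ), ∀ y ∈ Set.Ioi (0:ℝ), Kn x y ≤ Cn)
    (hKns : ∀ x ∈ Set.Ioi (0:ℝ), ∀ y ∈ Set.Ioi (0:ℝ), Kn x y = Kn y x)
    (f : ℝ → ℝ) (hfi : Integrable f μplus)
    (hf1 : Integrable (fun x => (1 + x) * f x) μplus)
    (hf0 : ∀ᵐ x ∂μplus, 0 ≤ f x)
    (χ : ℝ → ℝ) (hχc : Continuous χ) (hχ0 : ∀ x, 0 ≤ χ x) (Cb : ℝ) (hχb : ∀ x, χ x ≤ Cb)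
    (κ₁ : ℝ)
    (hkey : ∀ x ∈ Set.Ioi (0:ℝ), ∀ y ∈ Set.Ioi (0:ℝ),
      (1/2) * Kn x y * (χ (x + y) - χ x - χ y) ≤ κ₁ * ((1 + x) * χ y + (1 + y) * χ x)) :
    ∫ x, χ x * coagRHS Kn f x ∂μplus ≤
      2 * κ₁ * ((∫ x, (1 + x) * f x ∂μplus) * (∫ x, χ x * f x ∂μplus)) := by
  have hfm : AEStronglyMeasurable f μplus := hfi.aestronglyMeasurable
  -- a.e. facts on the product
  have haeν : ∀ᵐ x ∂μplus, x ∈ Set.Ioi (0:ℝ) ∧ 0 ≤ f x :=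
    (ae_restrict_mem measurableSet_Ioi).and hf0
  have haeπ : ∀ᵐ p ∂(μplus.prod μplus), (p.1 ∈ Set.Ioi (0:ℝ) ∧ 0 ≤ f p.1) ∧ (p.2 ∈ Set.Ioi (0:ℝ) ∧ 0 ≤ f p.2) :=
    (Measure.quasiMeasurePreserving_fst.ae haeν).and
      (Measure.quasiMeasurePreserving_snd.ae haeν)
  -- measurability on the product
  have hKnP : AEStronglyMeasurable (fun p : ℝ × ℝ => Kn p.1 p.2) (μplus.prod μplus) :=
    hKnm.aestronglyMeasurable
  have hffP : AEStronglyMeasurable (fun p : ℝ × ℝ => f p.1 * f p.2) (μplus.prod μplus) :=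
    hfm.comp_fst.mul hfm.comp_snd
  have habs : Integrable (fun p : ℝ × ℝ => |f p.1| * |f p.2|) (μplus.prod μplus) := hfi.abs.mul_prod hfi.abs
  have hCb0 : 0 ≤ Cb := le_trans (hχ0 0) (hχb 0)
  -- the three product integrands
  set g : ℝ × ℝ → ℝ := fun p => χ (p.1 + p.2) * (Kn p.1 p.2 * f p.1 * f p.2) with hgdef
  set H₂ : ℝ × ℝ → ℝ := fun p => (χ p.1 * f p.1) * (Kn p.1 p.2 * f p.2) with hH₂def
  set H₂' : ℝ × ℝ → ℝ := fun p => (χ p.2 * f p.2) * (Kn p.1 p.2 * f p.1) with hH₂'def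
  have hdom : Integrable (fun p : ℝ × ℝ => (Cb * Cn) * (|f p.1| * |f p.2|)) (μplus.prod μplus) :=
    habs.const_mul _
  have hg_int : Integrable g (μplus.prod μplus) := by
    refine hdom.mono' ((hχc.comp (continuous_fst.add continuous_snd)).aestronglyMeasurable.mul
      ((hKnP.mul hfm.comp_fst).mul hfm.comp_snd)) ?_
    filter_upwards [haeπ] with p hp
    have h1 := hKn0 _ hp.1.1 _ hp.2.1
    have h2 := hKnb _ hp.1.1 _ hp.2.1
    have hKCn : 0 ≤ Cn := le_trans h1 h2
    rw [Real.norm_eq_abs]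
    calc |χ (p.1 + p.2) * (Kn p.1 p.2 * f p.1 * f p.2)|
        = χ (p.1 + p.2) * Kn p.1 p.2 * (|f p.1| * |f p.2|) := by
          rw [abs_mul, abs_of_nonneg (hχ0 _), abs_mul, abs_mul, abs_of_nonneg h1]; ring
      _ ≤ Cb * Cn * (|f p.1| * |f p.2|) := by
          have : 0 ≤ |f p.1| * |f p.2| := by positivity
          have hm : χ (p.1 + p.2) * Kn p.1 p.2 ≤ Cb * Cn :=
            mul_le_mul (hχb _) h2 h1 hCb0
          exact mul_le_mul_of_nonneg_right hm this
  have hH₂_int : Integrable H₂ (μplus.prod μplus) := by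
    refine hdom.mono' (((hχc.aestronglyMeasurable.comp_fst.mul hfm.comp_fst)).mul (hKnP.mul hfm.comp_snd)) ?_
    filter_upwards [haeπ] with p hp
    have h1 := hKn0 _ hp.1.1 _ hp.2.1
    have h2 := hKnb _ hp.1.1 _ hp.2.1
    rw [Real.norm_eq_abs]
    calc |(χ p.1 * f p.1) * (Kn p.1 p.2 * f p.2)|
        = χ p.1 * Kn p.1 p.2 * (|f p.1| * |f p.2|) := by
          rw [abs_mul, abs_mul, abs_mul, abs_of_nonneg (hχ0 _), abs_of_nonneg h1]; ring
      _ ≤ Cb * Cn * (|f p.1| * |f p.2|) := by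
          have : 0 ≤ |f p.1| * |f p.2| := by positivity
          exact mul_le_mul_of_nonneg_right (mul_le_mul (hχb _) h2 h1 hCb0) this
  have hH₂'_int : Integrable H₂' (μplus.prod μplus) := by
    refine hdom.mono' (((hχc.aestronglyMeasurable.comp_snd.mul hfm.comp_snd)).mul (hKnP.mul hfm.comp_fst)) ?_
    filter_upwards [haeπ] with p hp
    have h1 := hKn0 _ hp.1.1 _ hp.2.1
    have h2 := hKnb _ hp.1.1 _ hp.2.1
    rw [Real.norm_eq_abs]
    calc |(χ p.2 * f p.2) * (Kn p.1 p.2 * f p.1)|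
        = χ p.2 * Kn p.1 p.2 * (|f p.1| * |f p.2|) := by
          rw [abs_mul, abs_mul, abs_mul, abs_of_nonneg (hχ0 _), abs_of_nonneg h1]; ring
      _ ≤ Cb * Cn * (|f p.1| * |f p.2|) := by
          have : 0 ≤ |f p.1| * |f p.2| := by positivity
          exact mul_le_mul_of_nonneg_right (mul_le_mul (hχb _) h2 h1 hCb0) this

  set I₁ : ℝ → ℝ := fun x => ∫ y in Set.Ioo (0:ℝ) x, Kn y (x - y) * f y * f (x - y) with hI₁def
  set I₂ : ℝ → ℝ := fun x => ∫ y in Set.Ioi (0:ℝ), Kn x y * f y with hI₂def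
  have hrestr : (volume.restrict (Set.Ioi (0:ℝ))) = μplus := rfl
  -- second term via Fubini
  have hI₂fun : (fun x => ∫ y, H₂ (x, y) ∂μplus) = fun x => (χ x * f x) * I₂ x := by
    funext x
    simp only [hH₂def, hI₂def, ← hrestr]
    exact integral_const_mul _ _
  have hT₂int : Integrable (fun x => (χ x * f x) * I₂ x) μplus := by
    have := hH₂_int.integral_prod_left
    rwa [hI₂fun] at this
  have hT₂ : ∫ x, (χ x * f x) * I₂ x ∂μplus = ∫ p, H₂ p ∂(μplus.prod μplus) := by
    rw [integral_prod _ hH₂_int, hI₂fun]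
  -- swap symmetrization
  have hswap : ∫ p, H₂ p ∂(μplus.prod μplus) = ∫ p, H₂' p ∂(μplus.prod μplus) := by
    have h1 : ∫ p, H₂ (Prod.swap p) ∂(μplus.prod μplus) = ∫ p, H₂ p ∂(μplus.prod μplus) :=
      (Measure.measurePreserving_swap).integral_comp
        MeasurableEquiv.prodComm.measurableEmbedding H₂
    rw [← h1]
    refine integral_congr_ae ?_
    filter_upwards [haeπ] with p hp
    show H₂ (p.2, p.1) = H₂' p
    simp only [hH₂def, hH₂'def]
    rw [hKns _ hp.2.1 _ hp.1.1]
  -- first term : change of variables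
  set G : ℝ × ℝ → ℝ := (Set.Ioi (0:ℝ) ×ˢ Set.Ioi (0:ℝ)).indicator g with hGdef
  have hprodrestrict : μplus.prod μplus
      = ((volume : Measure ℝ).prod volume).restrict (Set.Ioi (0:ℝ) ×ˢ Set.Ioi (0:ℝ)) :=
    Measure.prod_restrict _ _
  have hG_int : Integrable G ((volume : Measure ℝ).prod volume) := by
    rw [hGdef, integrable_indicator_iff (measurableSet_Ioi.prod measurableSet_Ioi)]
    show Integrable g (((volume : Measure ℝ).prod volume).restrict _)
    rw [← hprodrestrict]
    exact hg_int
  have hGeq : ∫ p, G p ∂((volume : Measure ℝ).prod volume) = ∫ p, g p ∂(μplus.prod μplus) := by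
    rw [hGdef, MeasureTheory.integral_indicator (measurableSet_Ioi.prod measurableSet_Ioi)]
    rw [hprodrestrict]
  set W : ℝ × ℝ → ℝ := fun p =>
    Set.indicator (Set.Ioo (0:ℝ) p.1) (fun y => χ p.1 * (Kn y (p.1 - y) * f y * f (p.1 - y))) p.2
    with hWdef
  have hWG : ∀ p : ℝ × ℝ, G (shearEquiv p) = W p := by
    intro p
    have hmem : shearEquiv p ∈ Set.Ioi (0:ℝ) ×ˢ Set.Ioi (0:ℝ) ↔ p.2 ∈ Set.Ioo 0 p.1 := by
      show (p.2 ∈ Set.Ioi (0:ℝ) ∧ p.1 - p.2 ∈ Set.Ioi (0:ℝ)) ↔ _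
      simp only [Set.mem_Ioi, Set.mem_Ioo]
      constructor
      · rintro ⟨h1, h2⟩; exact ⟨h1, by linarith⟩
      · rintro ⟨h1, h2⟩; exact ⟨h1, by linarith⟩
    by_cases h : p.2 ∈ Set.Ioo (0:ℝ) p.1
    · rw [hWdef]
      simp only []
      rw [Set.indicator_of_mem h, hGdef, Set.indicator_of_mem (hmem.2 h)]
      show χ (p.2 + (p.1 - p.2)) * (Kn p.2 (p.1 - p.2) * f p.2 * f (p.1 - p.2)) = _
      rw [add_sub_cancel]
    · rw [hWdef]
      simp only []
      rw [Set.indicator_of_notMem h, hGdef,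
        Set.indicator_of_notMem (fun hc => h (hmem.1 hc))]
  have hWfun : W = G ∘ shearEquiv := by
    funext p; rw [Function.comp_apply, hWG]
  have hW_int : Integrable W ((volume : Measure ℝ).prod volume) := by
    rw [hWfun]
    exact (shearEquiv_mp.integrable_comp_emb shearEquiv.measurableEmbedding).2 hG_int
  have hWeq : ∫ p, W p ∂((volume : Measure ℝ).prod volume)
      = ∫ p, G p ∂((volume : Measure ℝ).prod volume) := by
    rw [hWfun]
    exact shearEquiv_mp.integral_comp' G
  -- Fubini for W
  have hinner : (fun x => ∫ y, W (x, y) ∂volume) = fun x => χ x * I₁ x := by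
    funext x
    show ∫ y, Set.indicator (Set.Ioo (0:ℝ) x)
      (fun y => χ x * (Kn y (x - y) * f y * f (x - y))) y ∂volume = _
    rw [MeasureTheory.integral_indicator measurableSet_Ioo, MeasureTheory.integral_const_mul]
  have hT₁int : Integrable (fun x => χ x * I₁ x) μplus := by
    have := hW_int.integral_prod_left
    rw [hinner] at this
    exact this.restrict
  have hT₁vol : ∫ p, W p ∂((volume : Measure ℝ).prod volume) = ∫ x, χ x * I₁ x ∂volume := by
    rw [integral_prod _ hW_int, hinner]
  have hzero : ∀ x ∉ Set.Ioi (0:ℝ), χ x * I₁ x = 0 := by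
    intro x hx
    have : Set.Ioo (0:ℝ) x = ∅ := Set.Ioo_eq_empty (by simpa using hx)
    simp [hI₁def, this]
  have hvol : ∫ x, χ x * I₁ x ∂volume = ∫ x, χ x * I₁ x ∂μplus := by
    have hind : (fun x => χ x * I₁ x) = (Set.Ioi (0:ℝ)).indicator (fun x => χ x * I₁ x) := by
      funext x
      by_cases hx : x ∈ Set.Ioi (0:ℝ)
      · rw [Set.indicator_of_mem hx]
      · rw [Set.indicator_of_notMem hx, hzero x hx]
    conv_lhs => rw [hind]
    rw [MeasureTheory.integral_indicator measurableSet_Ioi]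
    rfl
  have hT₁ : ∫ x, χ x * I₁ x ∂μplus = ∫ p, g p ∂(μplus.prod μplus) := by
    rw [← hGeq, ← hWeq, hT₁vol]
    exact hvol.symm
  -- splitting the weak form
  have hsplit : ∫ x, χ x * coagRHS Kn f x ∂μplus
      = (1/2) * (∫ x, χ x * I₁ x ∂μplus) - ∫ x, (χ x * f x) * I₂ x ∂μplus := by
    have hcoag : (fun x => χ x * coagRHS Kn f x)
        = fun x => (1/2) * (χ x * I₁ x) - (χ x * f x) * I₂ x := by
      funext x
      show χ x * ((1/2) * I₁ x - f x * I₂ x) = _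
      ring
    have e0 : ∫ x, ((1/2 : ℝ) * (χ x * I₁ x) - (χ x * f x) * I₂ x) ∂μplus
        = (∫ x, (1/2 : ℝ) * (χ x * I₁ x) ∂μplus) - ∫ x, (χ x * f x) * I₂ x ∂μplus :=
      integral_sub (hT₁int.const_mul _) hT₂int
    have e0' : ∫ x, (1/2 : ℝ) * (χ x * I₁ x) ∂μplus = (1/2 : ℝ) * ∫ x, χ x * I₁ x ∂μplus :=
      integral_const_mul _ _
    rw [hcoag, e0, e0']
  -- integrability of the halves
  have hχf : Integrable (fun x => χ x * f x) μplus := by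
    refine hfi.bdd_mul (c := Cb) hχc.aestronglyMeasurable ?_
    exact Eventually.of_forall fun x => by
      rw [Real.norm_eq_abs, abs_of_nonneg (hχ0 x)]; exact hχb x
  set R : ℝ × ℝ → ℝ := fun p =>
    κ₁ * ((1 + p.1) * f p.1 * (χ p.2 * f p.2) + χ p.1 * f p.1 * ((1 + p.2) * f p.2)) with hRdef
  have hR_int : Integrable R (μplus.prod μplus) := by
    have h1 : Integrable (fun p : ℝ × ℝ => (1 + p.1) * f p.1 * (χ p.2 * f p.2))
        (μplus.prod μplus) := hf1.mul_prod hχf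
    have h2 : Integrable (fun p : ℝ × ℝ => χ p.1 * f p.1 * ((1 + p.2) * f p.2))
        (μplus.prod μplus) := hχf.mul_prod hf1
    exact (h1.add h2).const_mul κ₁
  have hcomb_int : Integrable (fun p => (1/2) * g p - (1/2) * H₂ p - (1/2) * H₂' p)
      (μplus.prod μplus) :=
    ((hg_int.const_mul _).sub (hH₂_int.const_mul _)).sub (hH₂'_int.const_mul _)
  have hEq : ∫ x, χ x * coagRHS Kn f x ∂μplus
      = ∫ p, ((1/2) * g p - (1/2) * H₂ p - (1/2) * H₂' p) ∂(μplus.prod μplus) := by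
    have h1 : Integrable (fun p => (1/2 : ℝ) * g p - (1/2 : ℝ) * H₂ p) (μplus.prod μplus) :=
      (hg_int.const_mul _).sub (hH₂_int.const_mul _)
    have e1 : ∫ p, ((1/2 : ℝ) * g p - (1/2 : ℝ) * H₂ p - (1/2 : ℝ) * H₂' p) ∂(μplus.prod μplus)
        = (∫ p, ((1/2 : ℝ) * g p - (1/2 : ℝ) * H₂ p) ∂(μplus.prod μplus))
          - ∫ p, (1/2 : ℝ) * H₂' p ∂(μplus.prod μplus) :=
      integral_sub h1 (hH₂'_int.const_mul _)
    have e2 : ∫ p, ((1/2 : ℝ) * g p - (1/2 : ℝ) * H₂ p) ∂(μplus.prod μplus)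
        = (∫ p, (1/2 : ℝ) * g p ∂(μplus.prod μplus))
          - ∫ p, (1/2 : ℝ) * H₂ p ∂(μplus.prod μplus) :=
      integral_sub (hg_int.const_mul _) (hH₂_int.const_mul _)
    have e3 : ∫ p, (1/2 : ℝ) * g p ∂(μplus.prod μplus)
        = (1/2 : ℝ) * ∫ p, g p ∂(μplus.prod μplus) := integral_const_mul _ _
    have e4 : ∫ p, (1/2 : ℝ) * H₂ p ∂(μplus.prod μplus)
        = (1/2 : ℝ) * ∫ p, H₂ p ∂(μplus.prod μplus) := integral_const_mul _ _
    have e5 : ∫ p, (1/2 : ℝ) * H₂' p ∂(μplus.prod μplus)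
        = (1/2 : ℝ) * ∫ p, H₂' p ∂(μplus.prod μplus) := integral_const_mul _ _
    rw [hsplit, hT₁, hT₂]
    linarith [hswap, e1, e2, e3, e4, e5]
  have hmono : ∫ p, ((1/2) * g p - (1/2) * H₂ p - (1/2) * H₂' p) ∂(μplus.prod μplus)
      ≤ ∫ p, R p ∂(μplus.prod μplus) := by
    refine integral_mono_ae hcomb_int hR_int ?_
    filter_upwards [haeπ] with p hp
    have hff : 0 ≤ f p.1 * f p.2 := mul_nonneg hp.1.2 hp.2.2
    have h := mul_le_mul_of_nonneg_right (hkey p.1 hp.1.1 p.2 hp.2.1) hff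
    calc (1/2) * g p - (1/2) * H₂ p - (1/2) * H₂' p
        = ((1/2) * Kn p.1 p.2 * (χ (p.1 + p.2) - χ p.1 - χ p.2)) * (f p.1 * f p.2) := by
          simp only [hgdef, hH₂def, hH₂'def]; ring
      _ ≤ (κ₁ * ((1 + p.1) * χ p.2 + (1 + p.2) * χ p.1)) * (f p.1 * f p.2) := h
      _ = R p := by simp only [hRdef]; ring
  have hRval : ∫ p, R p ∂(μplus.prod μplus)
      = 2 * κ₁ * ((∫ x, (1 + x) * f x ∂μplus) * (∫ x, χ x * f x ∂μplus)) := by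
    have h1 : Integrable (fun p : ℝ × ℝ => (1 + p.1) * f p.1 * (χ p.2 * f p.2))
        (μplus.prod μplus) := hf1.mul_prod hχf
    have h2 : Integrable (fun p : ℝ × ℝ => χ p.1 * f p.1 * ((1 + p.2) * f p.2))
        (μplus.prod μplus) := hχf.mul_prod hf1
    rw [hRdef]
    rw [MeasureTheory.integral_const_mul, integral_add h1 h2]
    rw [integral_prod_mul (fun x => (1 + x) * f x) (fun x => χ x * f x),
      integral_prod_mul (fun x => χ x * f x) (fun x => (1 + x) * f x)]
    ring
  rw [hEq, ← hRval]
  exact hmono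


end Aux

/-- Let `0 ≤ K(x,y) = K(y,x) ≤ κ₁(2+x+y)`, `f^in ∈ L¹₁(0,∞)` non-negative,
`n ≥ 1`, `K_n = min{K, n}`, and let `f_n` be the unique non-negative global `C¹([0,∞); L¹)`
solution with kernel `K_n` and initial condition `f^in`, which satisfies
`‖f_n(t)‖_{1,1} ≤ ‖f^in‖_{1,1}`. Let `ψ ∈ 𝒞_VP` with `x ↦ ψ(1+x) f^in(x) ∈ L¹(0,∞)`. Then
`∫₀^∞ ψ(1+x) f_n(t,x) dx ≤ (∫₀^∞ ψ(1+x) f^in(x) dx) · exp(2κ₁ ‖f^in‖_{1,1} t)` for `t ≥ 0`. -/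
theorem moment_estimate_linearly_growing_kernels
    (K : ℝ → ℝ → ℝ) (hKmeas : Measurable (Function.uncurry K))
    (κ₁ : ℝ) (hκ₁ : 0 < κ₁)
    (hKsymm : ∀ x ∈ Set.Ioi (0:ℝ), ∀ y ∈ Set.Ioi (0:ℝ), K x y = K y x)
    (hKbd : ∀ x ∈ Set.Ioi (0:ℝ), ∀ y ∈ Set.Ioi (0:ℝ),
      0 ≤ K x y ∧ K x y ≤ κ₁ * (2 + x + y))
    (fin : ℝ → ℝ) (hfin : Integrable fin μplus)
    (hfin1 : Integrable (fun x => (1 + x) * |fin x|) μplus)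
    (hfin0 : ∀ᵐ x ∂μplus, 0 ≤ fin x)
    (n : ℕ) (hn : 1 ≤ n)
    (F F' : ℝ → Lp ℝ 1 μplus)
    (hsol : IsC1L1Solution (fun x y => min (K x y) (n : ℝ)) fin F F')
    (hpos : ∀ t ∈ Set.Ici (0:ℝ), ∀ᵐ x ∂μplus, 0 ≤ (F t : ℝ → ℝ) x)
    (hmom : ∀ t ∈ Set.Ici (0:ℝ),
      Integrable (fun x => (1 + x) * |(F t : ℝ → ℝ) x|) μplus ∧
      ∫ x, (1 + x) * |(F t : ℝ → ℝ) x| ∂μplus ≤ ∫ x, (1 + x) * |fin x| ∂μplus)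
    (ψ ψ' : ℝ → ℝ)
    (hsmooth : ContDiffOn ℝ (⊤ : ℕ∞) ψ (Set.Ici 0))
    (hconv : ConvexOn ℝ (Set.Ici 0) ψ)
    (hderiv : ∀ r ∈ Set.Ici (0:ℝ), HasDerivWithinAt ψ (ψ' r) (Set.Ici 0) r)
    (hconc : ConcaveOn ℝ (Set.Ici 0) ψ')
    (hψ0 : ψ 0 = 0) (hψ'0 : ψ' 0 = 0)
    (hψ'pos : ∀ r : ℝ, 0 < r → 0 < ψ' r)
    (hψfin : Integrable (fun x => ψ (1 + x) * fin x) μplus)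
    (t : ℝ) (ht : 0 ≤ t) :
    Integrable (fun x => ψ (1 + x) * (F t : ℝ → ℝ) x) μplus ∧
    ∫ x, ψ (1 + x) * (F t : ℝ → ℝ) x ∂μplus ≤
      (∫ x, ψ (1 + x) * fin x ∂μplus) *
        Real.exp (2 * κ₁ * (∫ x, (1 + x) * |fin x| ∂μplus) * t) := by
  obtain ⟨hF_deriv, hF'cont, hF'eq, hF0⟩ := hsol
  set Kn : ℝ → ℝ → ℝ := fun x y => min (K x y) (n:ℝ) with hKndef
  have hn1 : (1:ℝ) ≤ (n:ℝ) := by exact_mod_cast hn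
  have hKnm : Measurable (Function.uncurry Kn) := hKmeas.min measurable_const
  have hKn0 : ∀ x ∈ Set.Ioi (0:ℝ), ∀ y ∈ Set.Ioi (0:ℝ), 0 ≤ Kn x y :=
    fun x hx y hy => le_min (hKbd x hx y hy).1 (by linarith)
  have hKnb : ∀ x ∈ Set.Ioi (0:ℝ), ∀ y ∈ Set.Ioi (0:ℝ), Kn x y ≤ (n:ℝ) :=
    fun x _ y _ => min_le_right _ _
  have hKns : ∀ x ∈ Set.Ioi (0:ℝ), ∀ y ∈ Set.Ioi (0:ℝ), Kn x y = Kn y x := by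
    intro x hx y hy
    simp only [hKndef]
    rw [hKsymm x hx y hy]
  have hUD : UniqueDiffOn ℝ (Set.Ici (0:ℝ)) := uniqueDiffOn_Ici 0
  have hψ'c : ContinuousOn ψ' (Set.Ici 0) := by
    have h := hsmooth.continuousOn_derivWithin hUD (by simp)
    exact h.congr fun r hr => ((hderiv r hr).derivWithin (hUD r hr)).symm
  have hψ'nn : ∀ r ∈ Set.Ici (0:ℝ), 0 ≤ ψ' r := by
    intro r hr
    rcases eq_or_lt_of_le (Set.mem_Ici.1 hr) with h | h
    · rw [← h, hψ'0]
    · exact (hψ'pos r h).le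
  have hψm := psi_mono hderiv hψ'nn
  have hψc := psi_cont hderiv
  have hψnn : ∀ r : ℝ, 0 ≤ r → 0 ≤ ψ r := by
    intro r hr
    have := hψm (Set.mem_Ici.2 le_rfl) (Set.mem_Ici.2 hr) hr
    rwa [hψ0] at this
  set B := ∫ x, (1 + x) * |fin x| ∂μplus with hBdef
  set P := ∫ x, ψ (1 + x) * fin x ∂μplus with hPdef
  have hP0 : 0 ≤ P := by
    refine integral_nonneg_of_ae ?_
    filter_upwards [ae_restrict_mem measurableSet_Ioi, hfin0] with x hx h0
    exact mul_nonneg (hψnn _ (by simp only [Set.mem_Ioi] at hx; linarith)) h0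
  set Cg := 2 * κ₁ * B with hCdef
  have hft : ∀ s ∈ Set.Ici (0:ℝ), Integrable (fun x => (1+x) * (F s : ℝ → ℝ) x) μplus ∧
      (∫ x, (1+x) * (F s : ℝ → ℝ) x ∂μplus) ≤ B := by
    intro s hs
    have h1 := (hmom s hs).1
    have h2 := (hmom s hs).2
    have hae : (fun x => (1+x) * |(F s : ℝ → ℝ) x|) =ᵐ[μplus]
        fun x => (1+x) * (F s : ℝ → ℝ) x := by
      filter_upwards [hpos s hs] with x hx
      rw [abs_of_nonneg hx]
    exact ⟨h1.congr hae, by rw [← integral_congr_ae hae]; exact h2⟩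
  -- the truncated Grönwall estimate
  have main : ∀ A : ℝ, 0 ≤ A →
      ∫ x, chiA ψ A x * (F t : ℝ → ℝ) x ∂μplus ≤ P * Real.exp (Cg * t) := by
    intro A hA
    set χ := chiA ψ A with hχdef
    have hχc : Continuous χ := chi_cont hψc hA
    have hχ0 : ∀ x, 0 ≤ χ x := chi_nonneg hψm hψ0 hA
    have hχb : ∀ x, χ x ≤ ψ (1 + A) := chi_le_const hψm hA
    have habsχ : ∀ x, |χ x| ≤ ψ (1 + A) := fun x => by
      rw [abs_of_nonneg (hχ0 x)]; exact hχb x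
    set L := pairing χ hχc (ψ (1+A)) habsχ with hLdef
    set u : ℝ → ℝ := fun s => L (F s) with hudef
    have hu_eq : ∀ s, u s = ∫ x, χ x * (F s : ℝ → ℝ) x ∂μplus := fun s => rfl
    have hu_nonneg : ∀ s ∈ Set.Ici (0:ℝ), 0 ≤ u s := by
      intro s hs
      rw [hu_eq]
      refine integral_nonneg_of_ae ?_
      filter_upwards [hpos s hs] with x hx
      exact mul_nonneg (hχ0 x) hx
    have hFc : ContinuousOn F (Set.Ici 0) := fun s hs => (hF_deriv s hs).continuousWithinAt
    have hu_cont : ContinuousOn u (Set.Icc 0 t) :=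
      (L.continuous.comp_continuousOn hFc).mono Set.Icc_subset_Ici_self
    have hu_deriv : ∀ s ∈ Set.Ico 0 t, HasDerivWithinAt u (L (F' s)) (Set.Ici s) s := by
      intro s hs
      exact L.hasFDerivAt.comp_hasDerivWithinAt s
        ((hF_deriv s hs.1).mono (Set.Ici_subset_Ici.2 hs.1))
    have hslope : ∀ s ∈ Set.Ico 0 t, ∀ r, L (F' s) < r →
        ∃ᶠ z in 𝓝[>] s, (z - s)⁻¹ * (u z - u s) < r := by
      intro s hs r hr
      refine ((hu_deriv s hs).liminf_right_slope_le hr).mono fun z hz => ?_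
      rwa [slope_def_field, div_eq_inv_mul] at hz
    have hbound : ∀ s ∈ Set.Ico 0 t, L (F' s) ≤ Cg * u s + 0 := by
      intro s hs
      have hsI : s ∈ Set.Ici (0:ℝ) := hs.1
      have hfi := L1.integrable_coeFn (F s)
      have hLF' : L (F' s) = ∫ x, χ x * coagRHS Kn ((F s : ℝ → ℝ)) x ∂μplus := by
        rw [show L (F' s) = ∫ x, χ x * (F' s : ℝ → ℝ) x ∂μplus from rfl]
        refine integral_congr_ae ?_
        filter_upwards [hF'eq s hsI] with x hx
        rw [hx]
      have hkey : ∀ x ∈ Set.Ioi (0:ℝ), ∀ y ∈ Set.Ioi (0:ℝ),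
          (1/2) * Kn x y * (χ (x + y) - χ x - χ y)
            ≤ κ₁ * ((1 + x) * χ y + (1 + y) * χ x) := by
        intro x hx y hy
        exact chi_key hconv hderiv hψ'c hconc hψ0 hψ'0 hψm hκ₁ hA hx hy
          (hKn0 x hx y hy) (le_trans (min_le_left _ _) (hKbd x hx y hy).2)
      have hwk := coag_weak_bound Kn hKnm (n:ℝ) hKn0 hKnb hKns (F s : ℝ → ℝ) hfi
        (hft s hsI).1 (hpos s hsI) χ hχc hχ0 (ψ (1+A)) hχb κ₁ hkey
      rw [hLF']
      refine le_trans hwk ?_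
      have hM := (hft s hsI).2
      have hMχ := hu_nonneg s hsI
      rw [hu_eq s] at hMχ ⊢
      have h1 : (∫ x, (1+x) * (F s : ℝ → ℝ) x ∂μplus) * (∫ x, χ x * (F s : ℝ → ℝ) x ∂μplus)
          ≤ B * ∫ x, χ x * (F s : ℝ → ℝ) x ∂μplus :=
        mul_le_mul_of_nonneg_right hM hMχ
      have h2 : 0 ≤ 2 * κ₁ := by linarith
      calc 2 * κ₁ * ((∫ x, (1+x) * (F s : ℝ → ℝ) x ∂μplus) *
              (∫ x, χ x * (F s : ℝ → ℝ) x ∂μplus))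
          ≤ 2 * κ₁ * (B * ∫ x, χ x * (F s : ℝ → ℝ) x ∂μplus) :=
            mul_le_mul_of_nonneg_left h1 h2
        _ = Cg * (∫ x, χ x * (F s : ℝ → ℝ) x ∂μplus) + 0 := by rw [hCdef]; ring
    have hu0 : u 0 ≤ P := by
      rw [hu_eq]
      have h00 : ∫ x, χ x * (F 0 : ℝ → ℝ) x ∂μplus = ∫ x, χ x * fin x ∂μplus := by
        refine integral_congr_ae ?_
        filter_upwards [hF0] with x hx
        rw [hx]
      rw [h00, hPdef]
      refine integral_mono_ae (hfin.bdd_mul (c := ψ (1+A)) hχc.aestronglyMeasurable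
        (Filter.Eventually.of_forall fun x => by rw [Real.norm_eq_abs]; exact habsχ x))
        hψfin ?_
      filter_upwards [ae_restrict_mem measurableSet_Ioi, hfin0] with x hx h0
      exact mul_le_mul_of_nonneg_right (chi_le_psi hψm hA (le_of_lt hx)) h0
    have hgr := le_gronwallBound_of_liminf_deriv_right_le hu_cont hslope hu0 hbound
      t ⟨ht, le_rfl⟩
    rw [gronwallBound_ε0, sub_zero] at hgr
    rw [← hu_eq]
    exact hgr
  have hint : ∀ A : ℝ, 0 ≤ A →
      Integrable (fun x => chiA ψ A x * (F t : ℝ → ℝ) x) μplus := by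
    intro A hA
    refine (L1.integrable_coeFn (F t)).bdd_mul (c := ψ (1+A))
      (chi_cont hψc hA).aestronglyMeasurable
      (Filter.Eventually.of_forall fun x => ?_)
    rw [Real.norm_eq_abs, abs_of_nonneg (chi_nonneg hψm hψ0 hA x)]
    exact chi_le_const hψm hA x
  set M := P * Real.exp (Cg * t) with hMdef
  have hM0 : 0 ≤ M := mul_nonneg hP0 (Real.exp_nonneg _)
  have hflim : ∀ᵐ x ∂μplus,
      (⨆ m : ℕ, ENNReal.ofReal (chiA ψ (m:ℝ) x * (F t : ℝ → ℝ) x))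
        = ENNReal.ofReal (ψ (1+x) * (F t : ℝ → ℝ) x) := by
    filter_upwards [ae_restrict_mem measurableSet_Ioi, hpos t ht] with x hx h0
    apply le_antisymm
    · exact iSup_le fun m => ENNReal.ofReal_le_ofReal
        (mul_le_mul_of_nonneg_right (chi_le_psi hψm (Nat.cast_nonneg m) (le_of_lt hx)) h0)
    · refine le_iSup_of_le ⌈x⌉₊ (le_of_eq ?_)
      rw [chi_eq_psi (le_of_lt hx) (Nat.le_ceil x)]
  have hmono_ae : ∀ᵐ x ∂μplus,
      Monotone fun m : ℕ => ENNReal.ofReal (chiA ψ (m:ℝ) x * (F t : ℝ → ℝ) x) := by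
    filter_upwards [hpos t ht] with x h0
    intro m k hmk
    exact ENNReal.ofReal_le_ofReal (mul_le_mul_of_nonneg_right
      (chi_mono_A hψm (Nat.cast_nonneg m) (by exact_mod_cast hmk) x) h0)
  have hmeas : ∀ m : ℕ,
      AEMeasurable (fun x => ENNReal.ofReal (chiA ψ (m:ℝ) x * (F t : ℝ → ℝ) x)) μplus :=
    fun m => ENNReal.measurable_ofReal.comp_aemeasurable
      (((chi_cont hψc (Nat.cast_nonneg m)).measurable.aemeasurable).mul
        (Lp.aestronglyMeasurable (F t)).aemeasurable)
  have hsup_le : ∫⁻ x, ENNReal.ofReal (ψ (1+x) * (F t : ℝ → ℝ) x) ∂μplus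
      ≤ ENNReal.ofReal M := by
    rw [← lintegral_congr_ae hflim, lintegral_iSup' hmeas hmono_ae]
    refine iSup_le fun m => ?_
    rw [← ofReal_integral_eq_lintegral_ofReal (hint m (Nat.cast_nonneg m)) ?_]
    · exact ENNReal.ofReal_le_ofReal (main m (Nat.cast_nonneg m))
    · filter_upwards [hpos t ht] with x h0
      exact mul_nonneg (chi_nonneg hψm hψ0 (Nat.cast_nonneg m) x) h0
  have hφnn : 0 ≤ᵐ[μplus] fun x => ψ (1+x) * (F t : ℝ → ℝ) x := by
    filter_upwards [ae_restrict_mem measurableSet_Ioi, hpos t ht] with x hx h0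
    exact mul_nonneg (hψnn _ (by simp only [Set.mem_Ioi] at hx; linarith)) h0
  have hφm : AEStronglyMeasurable (fun x => ψ (1+x) * (F t : ℝ → ℝ) x) μplus := by
    have hc : Continuous fun x : ℝ => ψ (1 + max x 0) := by
      refine hψc.comp_continuous (by fun_prop) fun x => ?_
      have : (0:ℝ) ≤ max x 0 := le_max_right _ _
      simp only [Set.mem_Ici]
      linarith
    refine (hc.aestronglyMeasurable.mul (Lp.aestronglyMeasurable (F t))).congr ?_
    filter_upwards [ae_restrict_mem measurableSet_Ioi] with x hx
    simp only [Pi.mul_apply]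
    rw [max_eq_left (le_of_lt hx)]
  have hφint : Integrable (fun x => ψ (1+x) * (F t : ℝ → ℝ) x) μplus := by
    refine ⟨hφm, ?_⟩
    rw [hasFiniteIntegral_iff_ofReal hφnn]
    exact lt_of_le_of_lt hsup_le ENNReal.ofReal_lt_top
  refine ⟨hφint, ?_⟩
  rw [integral_eq_lintegral_of_nonneg_ae hφnn hφm]
  calc (∫⁻ x, ENNReal.ofReal (ψ (1+x) * (F t : ℝ → ℝ) x) ∂μplus).toReal
      ≤ (ENNReal.ofReal M).toReal :=
        ENNReal.toReal_mono ENNReal.ofReal_ne_top hsup_le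
    _ = M := ENNReal.toReal_ofReal hM0

end
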